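/- As a corollary of the block Gershgorin theorem, the maximum eigenvalue of a Hermitian block-partitioned matrix A satisfies λ_max(A) ≤ max_i [ λ_max(A_{ii}) + Σ_{j≠i} σ_max(A_{ij}) ]. -/

import Mathlib

open Matrix

/-- The largest singular value of a complex matrix, i.e. the operator norm of the
associated linear map between Euclidean spaces. -/
noncomputable def sigmaMaxC {m n : Type*} [Fintype m] [Fintype n] [DecidableEq n]
    (A : Matrix m n ℂ) : ℝ :=
  ‖LinearMap.toContinuousLinearMap (Matrix.toEuclideanLin A)‖

/-- The largest eigenvalue of a Hermitian complex matrix. -/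
noncomputable def lambdaMaxC {n : Type*} [Fintype n] [DecidableEq n]
    {A : Matrix n n ℂ} (hA : A.IsHermitian) : ℝ :=
  ⨆ i, hA.eigenvalues i

/-!
Take an eigenvector `v` of `A` for an eigenvalue `μ`, cut it into blocks `ξ_j`, and let `ξ_i` be a
block of largest norm. Row block `i` of `A v = μ v` reads `Σ_j A_{ij} ξ_j = μ ξ_i`; pairing it with
`ξ_i` gives `μ ‖ξ_i‖² = ⟪ξ_i, A_{ii} ξ_i⟫ + Σ_{j≠i} ⟪ξ_i, A_{ij} ξ_j⟫`. The first term is at most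
`λ_max(A_{ii}) ‖ξ_i‖²` by the spectral theorem, and each other term at most
`σ_max(A_{ij}) ‖ξ_i‖ ‖ξ_j‖ ≤ σ_max(A_{ij}) ‖ξ_i‖²` by the choice of `i`. Dividing by `‖ξ_i‖² > 0`
bounds `μ` by the `i`-th term of the maximum.
-/

open Finset

theorem LinearMap.IsSymmetric.re_inner_apply_le_of_eigenbasis {𝕜 E ι : Type*} [RCLike 𝕜]
    [NormedAddCommGroup E] [InnerProductSpace 𝕜 E] [Fintype ι] {T : E →ₗ[𝕜] E}
    (hT : T.IsSymmetric) (b : OrthonormalBasis ι 𝕜 E) {μ : ι → ℝ}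
    (hb : ∀ k, T (b k) = (μ k : 𝕜) • b k) {c : ℝ} (hμ : ∀ k, μ k ≤ c) (x : E) :
    RCLike.re (inner 𝕜 x (T x)) ≤ c * ‖x‖ ^ 2 := by
  have hterm : ∀ k, inner 𝕜 x (b k) * inner 𝕜 (b k) (T x)
      = (μ k * ‖inner 𝕜 (b k) x‖ ^ 2 : ℝ) := fun k => by
    rw [← hT, hb, inner_smul_left, RCLike.conj_ofReal, ← inner_conj_symm x, mul_left_comm,
      RCLike.conj_mul]
    push_cast
    rfl
  calc RCLike.re (inner 𝕜 x (T x))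
      = ∑ k, μ k * ‖inner 𝕜 (b k) x‖ ^ 2 := by
        rw [← b.sum_inner_mul_inner x, Finset.sum_congr rfl fun k _ => hterm k,
          ← RCLike.ofReal_sum, RCLike.ofReal_re]
    _ ≤ ∑ k, c * ‖inner 𝕜 (b k) x‖ ^ 2 := by gcongr with k; exact hμ k
    _ = c * ‖x‖ ^ 2 := by rw [← mul_sum, b.sum_sq_norm_inner_right]

theorem Matrix.IsHermitian.toEuclideanLin_eigenvectorBasis {𝕜 n : Type*} [RCLike 𝕜]
    [Fintype n] [DecidableEq n] {A : Matrix n n 𝕜} (hA : A.IsHermitian) (k : n) :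
    toEuclideanLin A (hA.eigenvectorBasis k) =
      (hA.eigenvalues k : 𝕜) • hA.eigenvectorBasis k := by
  rw [toLpLin_apply, hA.mulVec_eigenvectorBasis, RCLike.real_smul_eq_coe_smul (K := 𝕜)]
  rfl

theorem Matrix.mulVec_comp_sigmaMk {R ι : Type*} [NonUnitalNonAssocSemiring R] [Fintype ι]
    {α β : ι → Type*} [∀ j, Fintype (β j)] (A : Matrix (Σ i, α i) (Σ j, β j) R)
    (v : (Σ j, β j) → R) (i : ι) :
    (A *ᵥ v) ∘ Sigma.mk i = ∑ j, A.submatrix (Sigma.mk i) (Sigma.mk j) *ᵥ (v ∘ Sigma.mk j) := by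
  ext a
  simp only [Function.comp_apply, mulVec, dotProduct, Finset.sum_apply, submatrix_apply]
  rw [← Finset.univ_sigma_univ, Finset.sum_sigma]

lemma lambdaMaxC_of_isEmpty {n : Type*} [Fintype n] [DecidableEq n] [IsEmpty n]
    {A : Matrix n n ℂ} (hA : A.IsHermitian) : lambdaMaxC hA = 0 :=
  Real.iSup_of_isEmpty _

lemma eigenvalues_le_lambdaMaxC {n : Type*} [Fintype n] [DecidableEq n]
    {A : Matrix n n ℂ} (hA : A.IsHermitian) (k : n) :
    hA.eigenvalues k ≤ lambdaMaxC hA :=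
  le_ciSup (Finite.bddAbove_range _) k

theorem re_inner_toEuclideanLin_self_le_lambdaMaxC {n : Type*} [Fintype n] [DecidableEq n]
    {A : Matrix n n ℂ} (hA : A.IsHermitian) (x : EuclideanSpace ℂ n) :
    (inner ℂ x (toEuclideanLin A x)).re ≤ lambdaMaxC hA * ‖x‖ ^ 2 :=
  (isSymmetric_toEuclideanLin_iff.mpr hA).re_inner_apply_le_of_eigenbasis hA.eigenvectorBasis
    hA.toEuclideanLin_eigenvectorBasis (eigenvalues_le_lambdaMaxC hA) x

lemma sigmaMaxC_nonneg {m n : Type*} [Fintype m] [Fintype n] [DecidableEq n]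
    (A : Matrix m n ℂ) : 0 ≤ sigmaMaxC A :=
  norm_nonneg _

theorem re_inner_toEuclideanLin_le_sigmaMaxC {m n : Type*} [Fintype m] [Fintype n]
    [DecidableEq n] (A : Matrix m n ℂ) (x : EuclideanSpace ℂ m) (y : EuclideanSpace ℂ n) :
    (inner ℂ x (toEuclideanLin A y)).re ≤ sigmaMaxC A * ‖x‖ * ‖y‖ :=
  calc (inner ℂ x (toEuclideanLin A y)).re
      ≤ ‖x‖ * ‖toEuclideanLin A y‖ := (Complex.re_le_norm _).trans (norm_inner_le_norm _ _)
    _ ≤ ‖x‖ * (sigmaMaxC A * ‖y‖) :=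
        mul_le_mul_of_nonneg_left ((LinearMap.toContinuousLinearMap _).le_opNorm y) (norm_nonneg x)
    _ = sigmaMaxC A * ‖x‖ * ‖y‖ := by ring

theorem exists_re_le_lambdaMaxC_add_sum_sigmaMaxC {ι : Type*} [Fintype ι] [DecidableEq ι]
    {α : ι → Type*} [∀ i, Fintype (α i)] [∀ i, DecidableEq (α i)]
    (A : Matrix (Σ i, α i) (Σ i, α i) ℂ)
    (hAi : ∀ i, (A.submatrix (Sigma.mk i) (Sigma.mk i)).IsHermitian)
    {μ : ℂ} {v : (Σ i, α i) → ℂ} (hv : v ≠ 0) (hAv : A *ᵥ v = μ • v) :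
    ∃ i, μ.re ≤ lambdaMaxC (hAi i) +
      ∑ j ∈ univ.erase i, sigmaMaxC (A.submatrix (Sigma.mk i) (Sigma.mk j)) := by
  set ξ : ∀ j, EuclideanSpace ℂ (α j) := fun j => WithLp.toLp 2 (v ∘ Sigma.mk j)
  obtain ⟨s, hs⟩ := Function.ne_iff.mp hv
  have : Nonempty ι := ⟨s.1⟩
  obtain ⟨i, hi⟩ := Finite.exists_max fun j => ‖ξ j‖
  have hξi : 0 < ‖ξ i‖ ^ 2 := by
    refine pow_pos ((norm_pos_iff.mpr fun h => hs ?_).trans_le (hi s.1)) 2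
    simpa [ξ] using congr($h s.2)
  have hblock : ∑ j, toEuclideanLin (A.submatrix (Sigma.mk i) (Sigma.mk j)) (ξ j) = μ • ξ i := by
    simp only [ξ, toLpLin_toLp, ← WithLp.toLp_sum, ← WithLp.toLp_smul, toLin'_apply,
      ← mulVec_comp_sigmaMk, hAv]
    rfl
  have hsplit : μ.re * ‖ξ i‖ ^ 2 = ∑ j,
      (inner ℂ (ξ i) (toEuclideanLin (A.submatrix (Sigma.mk i) (Sigma.mk j)) (ξ j))).re := by
    rw [← Complex.re_sum, ← inner_sum, hblock, inner_smul_right, inner_self_eq_norm_sq_to_K,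
      ← RCLike.ofReal_pow]
    exact (Complex.re_mul_ofReal _ _).symm
  rw [← add_sum_erase _ _ (mem_univ i)] at hsplit
  refine ⟨i, le_of_mul_le_mul_right ?_ hξi⟩
  calc μ.re * ‖ξ i‖ ^ 2 = _ := hsplit
    _ ≤ lambdaMaxC (hAi i) * ‖ξ i‖ ^ 2 + ∑ j ∈ univ.erase i,
          sigmaMaxC (A.submatrix (Sigma.mk i) (Sigma.mk j)) * ‖ξ i‖ * ‖ξ i‖ := by
      gcongr with j
      · exact re_inner_toEuclideanLin_self_le_lambdaMaxC (hAi i) (ξ i)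
      · exact (re_inner_toEuclideanLin_le_sigmaMaxC _ _ _).trans
          (mul_le_mul_of_nonneg_left (hi j) (mul_nonneg (sigmaMaxC_nonneg _) (norm_nonneg _)))
    _ = _ := by rw [add_mul, sum_mul]; simp only [mul_assoc, sq]

/-- Corollary of the block Gershgorin theorem:
`λ_max(A) ≤ max_i [λ_max(A_{ii}) + Σ_{j≠i} σ_max(A_{ij})]`. -/
theorem lambdaMax_le_block_gershgorin {L : ℕ} (d : Fin L → ℕ)
    (A : Matrix ((i : Fin L) × Fin (d i)) ((i : Fin L) × Fin (d i)) ℂ)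
    (hA : A.IsHermitian)
    (hAi : ∀ i : Fin L, (A.submatrix (Sigma.mk i) (Sigma.mk i)).IsHermitian) :
    lambdaMaxC hA ≤
      ⨆ i : Fin L, (lambdaMaxC (hAi i) +
        ∑ j ∈ Finset.univ.erase i,
          sigmaMaxC (A.submatrix (Sigma.mk i) (Sigma.mk j))) := by
  rcases isEmpty_or_nonempty ((i : Fin L) × Fin (d i)) with hempty | hne
  · rw [lambdaMaxC_of_isEmpty]
    refine Real.iSup_nonneg fun i => ?_
    have : IsEmpty (Fin (d i)) := ⟨fun a => hempty.false ⟨i, a⟩⟩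
    rw [lambdaMaxC_of_isEmpty, zero_add]
    exact sum_nonneg fun j _ => sigmaMaxC_nonneg _
  · refine ciSup_le fun k => ?_
    have hv := hA.mulVec_eigenvectorBasis k
    rw [← Complex.coe_smul] at hv
    obtain ⟨i, hi⟩ := exists_re_le_lambdaMaxC_add_sum_sigmaMaxC A hAi
      (mt (WithLp.ofLp_eq_zero 2).mp (hA.eigenvectorBasis.orthonormal.ne_zero k)) hv
    rw [Complex.ofReal_re] at hi
    exact le_ciSup_of_le (Finite.bddAbove_range _) i hi
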